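/- arXiv:1011.3619 — 2 statements merged into one kernel-verified Lean document; each statement's English description precedes it below -/
import Mathlib

section
/- In the factorization semigroup S(G,O), if s ∈ S(G,O) satisfies α(s) = 1 (the identity of G) and the group G_s generated by the factors of s is all of G, then ρ(g)(s) = s for every g ∈ G; that is, s is fixed under the conjugation action of G. -/
/-- `O` is invariant under conjugation. -/
def ConjInvariant {G : Type*} [Group G] (O : Set G) : Prop :=
  ∀ g a : G, a ∈ O → g * a * g⁻¹ ∈ O

/-- The elementary (Hurwitz) relation `x_{g₁} x_{g₂} ~ x_{g₁ g₂ g₁⁻¹} x_{g₁}`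
on words in the alphabet `{x_g : g ∈ O}`.  Together with symmetry and
transitivity it also yields `x_{g₁} x_{g₂} ~ x_{g₂} x_{g₂⁻¹ g₁ g₂}`. -/
def factorRel {G : Type*} [Group G] (O : Set G) :
    FreeMonoid O → FreeMonoid O → Prop := fun w w' =>
  ∃ (g₁ g₂ : O) (h : (g₁ : G) * g₂ * (g₁ : G)⁻¹ ∈ O),
    w = FreeMonoid.of g₁ * FreeMonoid.of g₂ ∧
    w' = FreeMonoid.of (⟨(g₁ : G) * g₂ * (g₁ : G)⁻¹, h⟩ : O) * FreeMonoid.of g₁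

/-- The congruence generated by the Hurwitz relations. -/
def factorCon {G : Type*} [Group G] (O : Set G) : Con (FreeMonoid O) :=
  conGen (factorRel O)

/-- The factorization semigroup `S(G,O)` of the equipped group `(G,O)`. -/
abbrev FactorSgp {G : Type*} [Group G] (O : Set G) := (factorCon O).Quotient

/-- The generator `x_g` of `S(G,O)`, for `g ∈ O`. -/
def xg {G : Type*} [Group G] (O : Set G) (g : O) : FactorSgp O :=
  (factorCon O).mk' (FreeMonoid.of g)

/-!
Repeated Hurwitz moves give the twisted commutativity `u · v = ρ(α u)(v) · u` in `S(G,O)`.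
Write `s = l₁ · x_a · l₂`; pulling `x_a` to the front gives `s = x_a · t` with `α t = a⁻¹`.
Then `ρ(a)(s) = x_a · ρ(a)(t)`, and since `α(ρ(a)(t)) = a⁻¹` while `ρ(a⁻¹)` fixes `x_a`,
twisted commutativity moves `x_a` across `ρ(a)(t)` unchanged:
`x_a · ρ(a)(t) = ρ(a)(t) · x_a = s`. So every factor of `s` stabilizes `s`, and the
factors generate `G`.
-/

section TwistedCommutative

variable {S G : Type*} [Monoid S] [Group G] {α : S →* G} {ρ : G →* MulAut S}

theorem apply_eq_self_of_apply_factor_eq_self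
    (hcomm : ∀ u v : S, u * v = ρ (α u) v * u)
    (hequiv : ∀ (g : G) (u : S), α (ρ g u) = g * α u * g⁻¹)
    {l₁ x l₂ : S} (hs : α (l₁ * x * l₂) = 1) (hx : ρ (α x) x = x) :
    ρ (α x) (l₁ * x * l₂) = l₁ * x * l₂ := by
  set t := ρ (α x)⁻¹ l₁ * l₂
  have hst : l₁ * x * l₂ = x * t := by
    rw [← mul_assoc, hcomm x, map_inv, MulAut.inv_apply, MulEquiv.apply_symm_apply]
  rw [hst] at hs ⊢
  have hαt : α t = (α x)⁻¹ := eq_inv_of_mul_eq_one_right (by rwa [map_mul] at hs)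
  have hx' : ρ (α x)⁻¹ x = x := by
    rw [map_inv, MulAut.inv_apply, MulEquiv.symm_apply_eq, hx]
  calc ρ (α x) (x * t) = x * ρ (α x) t := by rw [map_mul, hx]
    _ = ρ (α x) t * x := by
      rw [hcomm (ρ (α x) t), hequiv, hαt, mul_inv_cancel, one_mul, hx']
    _ = x * t := (hcomm x t).symm

end TwistedCommutative

namespace FactorSgp

variable {G : Type*} [Group G] {O : Set G}

theorem hom_ext {M : Type*} [Monoid M] {f g : FactorSgp O →* M}
    (h : ∀ a : O, f (xg O a) = g (xg O a)) : f = g :=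
  Con.hom_ext (FreeMonoid.hom_eq h)

@[elab_as_elim]
theorem induction_on {motive : FactorSgp O → Prop} (u : FactorSgp O) (one : motive 1)
    (xg_mul : ∀ (a : O) (u : FactorSgp O), motive u → motive (xg O a * u)) : motive u := by
  obtain ⟨v, rfl⟩ := Con.mk'_surjective u
  induction v using FreeMonoid.recOn with
  | one => exact one
  | of_mul a v ih => rw [map_mul]; exact xg_mul a _ ih

theorem mk_eq_mul_xg_mul {w : FreeMonoid O} {a : O} (ha : a ∈ w.toList) :
    ∃ l₁ l₂ : FactorSgp O, (factorCon O).mk' w = l₁ * xg O a * l₂ := by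
  obtain ⟨l₁, l₂, hw⟩ := List.append_of_mem ha
  refine ⟨(factorCon O).mk' (FreeMonoid.ofList l₁), (factorCon O).mk' (FreeMonoid.ofList l₂), ?_⟩
  rw [xg, ← map_mul, ← map_mul, ← FreeMonoid.ofList_toList w, hw]
  congr 1
  apply FreeMonoid.toList.injective
  simp

variable (hO : ConjInvariant O)
include hO

theorem xg_mul_xg (a b : O) :
    xg O a * xg O b = xg O ⟨a * b * (a : G)⁻¹, hO a b b.2⟩ * xg O a :=
  (Con.eq _).2 (ConGen.Rel.of _ _ ⟨a, b, hO a b b.2, rfl, rfl⟩)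

variable {ρ : G →* MulAut (FactorSgp O)}
  (hρ : ∀ (g : G) (a : O), ρ g (xg O a) = xg O ⟨g * a * g⁻¹, hO g a a.2⟩)
include hρ

theorem apply_xg_self (a : O) : ρ a (xg O a) = xg O a := by
  rw [hρ]
  congr 1
  exact Subtype.ext (mul_inv_cancel_right _ _)

theorem xg_mul_eq_apply_mul (a : O) (u : FactorSgp O) : xg O a * u = ρ a u * xg O a := by
  induction u using induction_on with
  | one => simp
  | xg_mul b u ih =>
    rw [← mul_assoc, xg_mul_xg hO, mul_assoc, ih, ← hρ, ← mul_assoc, ← map_mul]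

variable {α : FactorSgp O →* G} (hα : ∀ a : O, α (xg O a) = a)
include hα

theorem mul_eq_apply_mul (u v : FactorSgp O) : u * v = ρ (α u) v * u := by
  induction u using induction_on with
  | one => simp
  | xg_mul a u ih =>
    rw [mul_assoc, ih, ← mul_assoc, xg_mul_eq_apply_mul hO hρ, map_mul, hα, map_mul,
      MulAut.mul_apply, mul_assoc]

theorem map_apply_eq_conj (g : G) (u : FactorSgp O) : α (ρ g u) = g * α u * g⁻¹ := by
  have : α.comp (ρ g).toMonoidHom = (MulAut.conj g).toMonoidHom.comp α :=
    hom_ext fun a => by simp [hρ, hα]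
  exact DFunLike.congr_fun this u

end FactorSgp

/-- If `α(s) = 1` and the factors of `s` generate all of `G`, then `s` is fixed
under the conjugation action of `G`. -/
theorem fixed_of_product_one_full_monodromy {G : Type*} [Group G] (O : Set G)
    (hO : ConjInvariant O)
    (α : FactorSgp O →* G) (hα : ∀ g : O, α (xg O g) = g)
    (ρ : G →* MulAut (FactorSgp O))
    (hρ : ∀ (g : G) (a : O),
      ρ g (xg O a) = xg O ⟨g * a * g⁻¹, hO g a a.2⟩)
    (w : FreeMonoid O)
    (h1 : α ((factorCon O).mk' w) = 1)
    (hgen : Subgroup.closure {g : G | ∃ a ∈ FreeMonoid.toList w, (a : G) = g} = ⊤) :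
    ∀ g : G, ρ g ((factorCon O).mk' w) = (factorCon O).mk' w := by
  have hfactor : ∀ a ∈ w.toList, ρ a ((factorCon O).mk' w) = (factorCon O).mk' w := by
    intro a ha
    obtain ⟨l₁, l₂, hw⟩ := FactorSgp.mk_eq_mul_xg_mul ha
    rw [hw] at h1 ⊢
    simpa only [hα] using apply_eq_self_of_apply_factor_eq_self
      (FactorSgp.mul_eq_apply_mul hO hρ hα) (FactorSgp.map_apply_eq_conj hO hρ hα) h1
      (by rw [hα]; exact FactorSgp.apply_xg_self hO hρ a)
  have hstab : Subgroup.closure {g : G | ∃ a ∈ w.toList, (a : G) = g} ≤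
      (MulAction.stabilizer (MulAut (FactorSgp O)) ((factorCon O).mk' w)).comap ρ :=
    Subgroup.closure_le _ |>.2 fun _ ⟨a, ha, hag⟩ => hag ▸ hfactor a ha
  exact fun g => hstab (hgen ▸ Subgroup.mem_top g)
end

section
/- Let C be the conjugacy class of an odd permutation σ ∈ S_d with at least 2 fixed points (f_C ≥ 2). Then the transposition (1,2) can be written as a product of elements of C all of which fix both 3 and 4. -/
/-!
Two fixed points let us conjugate `σ` to a permutation `τ` fixing `2` and `3`. Conjugating `τ` by
permutations of the remaining points, which fix `2` and `3`, generates a normal subgroup of the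
symmetric group on those points that contains an odd permutation `g`, and such a subgroup is
everything: commutators `[(x y), g]` produce a 3-cycle, or, when `g` is an involution, a
transposition or a double transposition, which yields a 3-cycle once a fifth point is available
(as it is, since `g` is odd and not a transposition). So the subgroup contains the alternating
group and an odd element. In a finite group the generated subgroup is the generated monoid.
-/

open Equiv Subgroup

namespace Equiv.Perm

section NormalSubgroup

variable {α : Type*} [DecidableEq α] {N : Subgroup (Perm α)}

theorem eq_top_of_alternatingGroup_le [Fintype α] {g : Perm α} (hA : alternatingGroup α ≤ N)
    (hg : g ∈ N) (hsg : sign g = -1) : N = ⊤ := by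
  refine N.eq_top_iff'.mpr fun f => ?_
  rcases Int.units_eq_one_or (sign f) with hf | hf
  · exact hA (mem_alternatingGroup.mpr hf)
  · have hfg : f * g⁻¹ ∈ alternatingGroup α := by
      rw [mem_alternatingGroup, map_mul, map_inv, hf, hsg, mul_inv_cancel]
    simpa using mul_mem (hA hfg) hg

variable [N.Normal]

theorem swap_mul_swap_apply_mem {g : Perm α} (hg : g ∈ N) (x y : α) :
    swap x y * swap (g x) (g y) ∈ N := by
  have hcomm : swap x y * swap (g x) (g y) = swap x y * g * (swap x y)⁻¹ * g⁻¹ := by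
    rw [swap_apply_apply, swap_inv]
    group
  rw [hcomm]
  exact mul_mem (Normal.conj_mem ‹_› g hg _) (inv_mem hg)

theorem swap_mul_swap_conj_mem {a b x y : α} (h : swap a x * swap b y ∈ N) (k : Perm α) :
    swap (k a) (k x) * swap (k b) (k y) ∈ N := by
  have hconj : swap (k a) (k x) * swap (k b) (k y) = k * (swap a x * swap b y) * k⁻¹ := by
    rw [swap_apply_apply, swap_apply_apply]
    group
  rw [hconj]
  exact Normal.conj_mem ‹_› _ h k

variable [Fintype α]

theorem eq_top_of_isSwap_mem {t : Perm α} (ht : t.IsSwap) (htN : t ∈ N) : N = ⊤ := by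
  rw [eq_top_iff, ← closure_isSwap, closure_le]
  rintro _ ⟨x, y, hxy, rfl⟩
  obtain ⟨a, b, hab, rfl⟩ := ht
  obtain ⟨c, hc⟩ := isConj_iff.mp (isConj_swap hab hxy)
  exact hc ▸ Normal.conj_mem ‹_› _ htN c

theorem alternatingGroup_le_of_isThreeCycle_mem {c : Perm α} (hc : c.IsThreeCycle) (hcN : c ∈ N) :
    alternatingGroup α ≤ N := by
  rw [← closure_three_cycles_eq_alternating, closure_le]
  intro u hu
  obtain ⟨k, hk⟩ := isConj_iff.mp
    (isConj_iff_cycleType_eq.mpr (hc.cycleType.trans hu.cycleType.symm))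
  exact hk ▸ Normal.conj_mem ‹_› _ hcN k

/-- Conjugating `(a x)(b y)` by `(y e)` and dividing by it leaves the three-cycle `(b y)(b e)`. -/
theorem alternatingGroup_le_of_swap_mul_swap_mem {a b x y e : α} (hay : a ≠ y) (hxy : x ≠ y)
    (hby : b ≠ y) (hea : e ≠ a) (heb : e ≠ b) (hex : e ≠ x) (hey : e ≠ y)
    (h : swap a x * swap b y ∈ N) : alternatingGroup α ≤ N := by
  have h' : swap a x * swap b e ∈ N := by
    simpa [swap_apply_of_ne_of_ne, hay, hxy, hby, hea.symm, heb.symm, hex.symm]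
      using swap_mul_swap_conj_mem h (swap y e)
  have h3 : swap b y * swap b e ∈ N := by
    simpa [mul_assoc] using mul_mem (inv_mem h) h'
  exact alternatingGroup_le_of_isThreeCycle_mem
    (isThreeCycle_swap_mul_swap_same hby heb.symm hey.symm) h3

theorem eq_top_of_involutive_mem {g : Perm α} (hinv : ∀ z, g (g z) = z) (hg : g ∈ N)
    (hsg : sign g = -1) : N = ⊤ := by
  obtain ⟨a, ha⟩ : ∃ a, g a ≠ a := by
    by_contra! hfix
    simp [show g = 1 from Equiv.ext hfix] at hsg
  obtain ⟨b, hab⟩ : ∃ b, g a = b := ⟨_, rfl⟩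
  have hba : g b = a := hab ▸ hinv a
  by_cases hswap : g = swap a b
  · exact eq_top_of_isSwap_mem ⟨a, b, hab ▸ ha.symm, hswap⟩ (hswap ▸ hg)
  obtain ⟨x, hx⟩ : ∃ x, g x ≠ swap a b x := by
    by_contra! h
    exact hswap (Equiv.ext h)
  obtain ⟨y, hxy⟩ : ∃ y, g x = y := ⟨_, rfl⟩
  have hyx : g y = x := hxy ▸ hinv x
  have hxa : x ≠ a := by rintro rfl; simp_all
  have hxb : x ≠ b := by rintro rfl; simp_all
  have hya : y ≠ a := by rintro rfl; simp_all
  have hyb : y ≠ b := by rintro rfl; simp_all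
  have hxy' : x ≠ y := by rintro rfl; simp_all [swap_apply_of_ne_of_ne]
  have hab' : a ≠ b := by rintro rfl; simp_all
  by_cases hdouble : g = swap a b * swap x y
  · have : sign g = 1 := by
      rw [hdouble, map_mul, sign_swap hab', sign_swap hxy']
      decide
    simp [this] at hsg
  obtain ⟨e, he⟩ : ∃ e, g e ≠ (swap a b * swap x y) e := by
    by_contra! h
    exact hdouble (Equiv.ext h)
  have hea : e ≠ a := by
    rintro rfl
    simp [swap_apply_of_ne_of_ne hxa.symm hya.symm, hab] at he
  have heb : e ≠ b := by
    rintro rfl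
    simp [swap_apply_of_ne_of_ne hxb.symm hyb.symm, hba] at he
  have hex : e ≠ x := by
    rintro rfl
    simp [swap_apply_of_ne_of_ne hya hyb, hxy] at he
  have hey : e ≠ y := by
    rintro rfl
    simp [swap_apply_of_ne_of_ne hxa hxb, hyx] at he
  have hN := swap_mul_swap_apply_mem hg a x
  rw [hab, hxy] at hN
  exact eq_top_of_alternatingGroup_le
    (alternatingGroup_le_of_swap_mul_swap_mem hya.symm hxy' hyb.symm hea heb hex hey hN) hg hsg

theorem eq_top_of_mem_of_sign_eq_neg_one {g : Perm α} (hg : g ∈ N) (hsg : sign g = -1) :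
    N = ⊤ := by
  by_cases hinv : ∀ z, g (g z) = z
  · exact eq_top_of_involutive_mem hinv hg hsg
  obtain ⟨a, ha⟩ := not_forall.mp hinv
  have hga : g a ≠ a := fun h => ha (by rw [h, h])
  have hgga : g a ≠ g (g a) := fun h => hga (g.injective h).symm
  have hc := swap_mul_swap_apply_mem hg a (g a)
  rw [swap_comm a] at hc
  exact eq_top_of_alternatingGroup_le (alternatingGroup_le_of_isThreeCycle_mem
    (isThreeCycle_swap_mul_swap_same hga hgga (Ne.symm ha)) hc) hg hsg

end NormalSubgroup

section Fixing

variable {α : Type*} [Fintype α] [DecidableEq α]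

theorem ofSubtype_mem_closure_isConj_fixing {σ τ : Perm α} (hσ : sign σ = -1)
    (hτ : IsConj σ τ) {s : Finset α} (hτs : ∀ x ∈ s, τ x = x) (f : Perm {x // x ∉ s}) :
    ofSubtype f ∈ closure {ρ : Perm α | IsConj σ ρ ∧ ∀ x ∈ s, ρ x = x} := by
  have hτ' : ∀ x, τ x ∉ s ↔ x ∉ s := fun x => by
    refine not_congr ⟨fun h => ?_, fun h => (hτs x h).symm ▸ h⟩
    rwa [← τ.injective (hτs _ h)]
  set τ' := τ.subtypePerm (p := (· ∉ s)) hτ'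
  have hττ' : ofSubtype τ' = τ :=
    ofSubtype_subtypePerm hτ' fun x hx hxs => hx (hτs x hxs)
  have hsign : sign τ' = -1 := by
    rw [← sign_ofSubtype, hττ', ← hσ]
    exact (isConj_iff_eq.mp (sign.map_isConj hτ)).symm
  have htop := eq_top_of_mem_of_sign_eq_neg_one (N := normalClosure {τ'})
    (subset_normalClosure rfl) hsign
  have hf := mem_map_of_mem ofSubtype (htop ▸ mem_top f : f ∈ normalClosure {τ'})
  rw [normalClosure, MonoidHom.map_closure] at hf
  refine closure_mono ?_ hf
  rintro _ ⟨ρ, hρ, rfl⟩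
  obtain ⟨_, rfl, hτρ⟩ := Group.mem_conjugatesOfSet_iff.mp hρ
  exact ⟨hτ.trans (hττ' ▸ ofSubtype.map_isConj hτρ),
    fun x hx => ofSubtype_apply_of_not_mem ρ (not_not.mpr hx)⟩

theorem swap_mem_closure_isConj_fixing {σ τ : Perm α} (hσ : sign σ = -1) (hτ : IsConj σ τ)
    {s : Finset α} (hτs : ∀ x ∈ s, τ x = x) {x y : α} (hx : x ∉ s) (hy : y ∉ s) :
    swap x y ∈ Submonoid.closure {ρ : Perm α | IsConj σ ρ ∧ ∀ z ∈ s, ρ z = z} := by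
  rw [← closure_toSubmonoid_of_finite, ← ofSubtype_swap_eq (p := (· ∉ s)) ⟨x, hx⟩ ⟨y, hy⟩]
  exact ofSubtype_mem_closure_isConj_fixing hσ hτ hτs _

end Fixing

theorem exists_perm_apply_eq_and_apply_eq {α : Type*} [DecidableEq α] {p q p' q' : α}
    (hpq : p ≠ q) (hpq' : p' ≠ q') : ∃ c : Perm α, c p = p' ∧ c q = q' := by
  have hq : swap p p' q ≠ p' := fun h => hpq (swap_apply_eq_iff.mp h ▸ swap_apply_right p p').symm
  exact ⟨swap (swap p p' q) q' * swap p p', by simp [swap_apply_of_ne_of_ne hq.symm hpq'], by simp⟩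

end Equiv.Perm

theorem swap_product_of_class_fixing (d : ℕ) (hd : 4 ≤ d) (σ : Equiv.Perm (Fin d))
    (hσ : Equiv.Perm.sign σ = -1)
    (hfix : 2 ≤ (Finset.univ.filter fun x : Fin d => σ x = x).card) :
    Equiv.swap (⟨0, by omega⟩ : Fin d) ⟨1, by omega⟩ ∈
      Submonoid.closure
        {τ : Equiv.Perm (Fin d) | IsConj σ τ ∧
          τ ⟨2, by omega⟩ = ⟨2, by omega⟩ ∧ τ ⟨3, by omega⟩ = ⟨3, by omega⟩} := by
  obtain ⟨p, hp, q, hq, hpq⟩ := Finset.one_lt_card.mp hfix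
  obtain ⟨c, hcp, hcq⟩ := Perm.exists_perm_apply_eq_and_apply_eq hpq
    (show (⟨2, by omega⟩ : Fin d) ≠ ⟨3, by omega⟩ by simp)
  have hτs : ∀ z ∈ ({⟨2, by omega⟩, ⟨3, by omega⟩} : Finset (Fin d)), (c * σ * c⁻¹) z = z := by
    simp [← hcp, ← hcq, (Finset.mem_filter.mp hp).2, (Finset.mem_filter.mp hq).2]
  simpa using Perm.swap_mem_closure_isConj_fixing hσ (isConj_iff.mpr ⟨c, rfl⟩) hτs
    (x := ⟨0, by omega⟩) (y := ⟨1, by omega⟩) (by simp) (by simp)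
end
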